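/- Under the homogeneous Dawid–Skene model with constant assignment probability q and majority voting: if w̄ = (1/M)·Σ_{i=1}^M w_i > 1/L, then E[E_N] ≤ (L−1)·exp(−(1/2)·(L/(L−1))²·M·q²·(w̄ − 1/L)²), and also E[E_N] ≤ (L−1)·exp( −[(1/2)·(L/(L−1))²·M·q·(w̄ − 1/L)²] / [1 + (L/(3(L−1)))·(w̄ − 1/L)] ). -/

import Mathlib

/-!
Fix an item with true label `k` and a competitor `g ≠ k`. Given the label, the workers vote
independently, and `Xᵢ = 1{Zᵢ = g} - 1{Zᵢ = k}` has moment generating function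
`1 + Pᵢ (e⁻ᵗ - 1) + Rᵢ (eᵗ - 1)` with `Pᵢ = q wᵢ` and `Rᵢ = q (1 - wᵢ) / (L - 1)`. With `P = ∑ Pᵢ`,
`R = ∑ Rᵢ`, the Chernoff bound for the event `∑ Xᵢ ≥ 0` at `t = log √(P / R)` is
`exp (-(√P - √R)²) ≤ exp (-(P - R)² / (2 M q))`, and `(P - R)² / (2 M q)` is exactly
`(1/2) (L / (L - 1))² M q (w̄ - 1/L)²`. A union bound over the `L - 1` competitors bounds the error
probability of every item by `(L - 1)` times this exponential. Both stated bounds are weaker: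
the first since `q² ≤ q`, the second since its denominator is at least `1`.
-/

open MeasureTheory ProbabilityTheory Real

noncomputable section

namespace CrowdHom

/-- Conditional law of `Z i j ∈ Fin (L+1)` (`0` = missing) given the true label `y j = k`
under the homogeneous Dawid–Skene model with constant assignment probability `q` and
worker accuracies `w`. -/
def condLaw {M L : ℕ} (q : ℝ) (w : Fin M → ℝ) (i : Fin M) (k : Fin L)
    (h : Fin (L + 1)) : ℝ :=
  if hz : h = 0 then 1 - q
  else q * (if h.pred hz = k then w i else (1 - w i) / ((L : ℝ) - 1))

/-- The quantity `t` of weighted majority voting under the homogeneous model. -/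
def tWMV {M : ℕ} (L : ℕ) (q : ℝ) (w v : Fin M → ℝ) : ℝ :=
  q / (((L : ℝ) - 1) * Real.sqrt (∑ i, v i ^ 2)) * ∑ i, v i * ((L : ℝ) * w i - 1)

/-- `c = ‖v‖_∞ / ‖v‖₂`. -/
def cConst {M : ℕ} (v : Fin M → ℝ) : ℝ :=
  (sSup {x : ℝ | ∃ i : Fin M, x = |v i|}) / Real.sqrt (∑ i, v i ^ 2)

end CrowdHom

open Finset

theorem exists_nonneg_chernoff_exponent_le {P R S : ℝ} (hR : 0 ≤ R) (hRP : R < P)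
    (hS : P + R ≤ S) :
    ∃ t : ℝ, 0 ≤ t ∧ P * (exp (-t) - 1) + R * (exp t - 1) ≤ -(P - R) ^ 2 / (2 * S) := by
  have hP : 0 < P := hR.trans_lt hRP
  rcases hR.eq_or_lt with rfl | hR
  · refine ⟨log 2, log_nonneg one_le_two, ?_⟩
    rw [exp_neg, exp_log two_pos, le_div_iff₀ (by linarith)]
    nlinarith
  obtain ⟨a, ha, rfl⟩ : ∃ a > 0, a ^ 2 = P := ⟨√P, sqrt_pos.2 hP, sq_sqrt hP.le⟩
  obtain ⟨b, hb, rfl⟩ : ∃ b > 0, b ^ 2 = R := ⟨√R, sqrt_pos.2 hR, sq_sqrt hR.le⟩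
  have hba : b ≤ a := (pow_lt_pow_iff_left₀ hb.le ha.le two_ne_zero).1 hRP |>.le
  -- `t = log (a / b)` minimises the left-hand side, where it equals `-(a - b) ^ 2`
  refine ⟨log (a / b), log_nonneg ((one_le_div hb).2 hba), ?_⟩
  have hS0 : 0 < S := by nlinarith
  rw [exp_neg, exp_log (by positivity), inv_div,
    show a ^ 2 * (b / a - 1) + b ^ 2 * (a / b - 1) = -(a - b) ^ 2 by field_simp; ring,
    neg_div, neg_le_neg_iff, div_le_iff₀ (by positivity)]
  have hab : (a + b) ^ 2 ≤ 2 * S := by nlinarith [sq_nonneg (a - b)]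
  calc (a ^ 2 - b ^ 2) ^ 2 = (a - b) ^ 2 * (a + b) ^ 2 := by ring
    _ ≤ (a - b) ^ 2 * (2 * S) := by gcongr

theorem sum_prod_le_prod_sum_mul_exp {ι α : Type*} [Fintype ι] [DecidableEq ι] [Fintype α]
    {p : ι → α → ℝ} (hp : ∀ i a, 0 ≤ p i a) (X : ι → α → ℝ) {T : Finset (ι → α)}
    (hT : ∀ h ∈ T, 0 ≤ ∑ i, X i (h i)) {t : ℝ} (ht : 0 ≤ t) :
    ∑ h ∈ T, ∏ i, p i (h i) ≤ ∏ i, ∑ a, p i a * exp (t * X i a) := by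
  calc ∑ h ∈ T, ∏ i, p i (h i) ≤ ∑ h ∈ T, ∏ i, p i (h i) * exp (t * X i (h i)) := by
        refine sum_le_sum fun h hh => ?_
        rw [prod_mul_distrib, ← exp_sum, ← mul_sum]
        exact le_mul_of_one_le_right (prod_nonneg fun i _ => hp i _)
          (one_le_exp (mul_nonneg ht (hT h hh)))
    _ ≤ ∑ h : ι → α, ∏ i, p i (h i) * exp (t * X i (h i)) := by
        refine sum_le_sum_of_subset_of_nonneg (subset_univ T) fun h _ _ => ?_
        exact prod_nonneg fun i _ => mul_nonneg (hp i _) (exp_pos _).le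
    _ = ∏ i, ∑ a, p i a * exp (t * X i a) := by
        rw [Fintype.prod_sum]

theorem prod_le_exp_sum_of_le_one_add {ι : Type*} {s : Finset ι} {f c : ι → ℝ}
    (hf : ∀ i ∈ s, 0 ≤ f i) (hfc : ∀ i ∈ s, f i ≤ 1 + c i) : ∏ i ∈ s, f i ≤ exp (∑ i ∈ s, c i) := by
  rw [exp_sum]
  exact prod_le_prod hf fun i hi => (hfc i hi).trans (by linarith [add_one_le_exp (c i)])

theorem MeasureTheory.measureReal_and_mem_le_sum {Ω β : Type*} [MeasurableSpace Ω]
    {μ : Measure Ω} [IsFiniteMeasure μ] (p : Ω → Prop) (V : Ω → β) (T : Finset β) :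
    μ.real {ω | p ω ∧ V ω ∈ T} ≤ ∑ b ∈ T, μ.real {ω | p ω ∧ V ω = b} :=
  calc μ.real {ω | p ω ∧ V ω ∈ T} ≤ μ.real (⋃ b ∈ T, {ω | p ω ∧ V ω = b}) :=
        measureReal_mono (fun _ ⟨hp, hV⟩ => Set.mem_biUnion hV ⟨hp, rfl⟩) (measure_ne_top μ _)
    _ ≤ _ := measureReal_biUnion_finset_le _ _

theorem inv_mul_sum_le_of_forall_le {N : ℕ} {a : Fin N → ℝ} {c : ℝ} (hc : 0 ≤ c)
    (ha : ∀ j, a j ≤ c) : (N : ℝ)⁻¹ * ∑ j, a j ≤ c := by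
  calc (N : ℝ)⁻¹ * ∑ j, a j ≤ (N : ℝ)⁻¹ * (N * c) := by
        gcongr
        simpa using sum_le_card_nsmul univ a c fun j _ => ha j
    _ ≤ c := by
        rcases N.eq_zero_or_pos with rfl | hN
        · simpa using hc
        · rw [inv_mul_cancel_left₀ (by positivity)]

namespace CrowdHom

def voteCount {M L : ℕ} (z : Fin M → Fin (L + 1)) (k : Fin L) : ℝ :=
  ∑ i, if z i = k.succ then 1 else 0

def majorityExponent (L M : ℕ) (q wbar : ℝ) : ℝ :=
  1 / 2 * ((L : ℝ) / ((L : ℝ) - 1)) ^ 2 * M * q * (wbar - 1 / L) ^ 2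

variable {M L : ℕ} {q : ℝ} {w : Fin M → ℝ}

@[simp] theorem condLaw_zero (i : Fin M) (k : Fin L) : condLaw q w i k 0 = 1 - q := by
  simp [condLaw]

@[simp] theorem condLaw_succ (i : Fin M) (k b : Fin L) :
    condLaw q w i k b.succ = q * if b = k then w i else (1 - w i) / ((L : ℝ) - 1) := by
  simp [condLaw]

theorem condLaw_nonneg (hq0 : 0 ≤ q) (hq1 : q ≤ 1) (i : Fin M) (hw0 : 0 ≤ w i) (hw1 : w i ≤ 1)
    (k : Fin L) (a : Fin (L + 1)) : 0 ≤ condLaw q w i k a := by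
  have hL : (1 : ℝ) ≤ L := by exact_mod_cast k.pos
  cases a using Fin.cases with
  | zero => simpa using hq1
  | succ b =>
    rw [condLaw_succ]
    split_ifs
    · positivity
    · exact mul_nonneg hq0 (div_nonneg (by linarith) (by linarith))

theorem sum_condLaw (hL : 2 ≤ L) (i : Fin M) (k : Fin L) : ∑ a, condLaw q w i k a = 1 := by
  have hL1 : (L : ℝ) - 1 ≠ 0 := by
    have : (2 : ℝ) ≤ L := by exact_mod_cast hL
    linarith
  rw [Fin.sum_univ_succ, condLaw_zero]
  simp only [condLaw_succ]
  rw [← mul_sum, ← add_sum_erase _ _ (mem_univ k), if_pos rfl,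
    sum_congr rfl fun b hb => if_neg (ne_of_mem_erase hb), sum_const,
    card_erase_of_mem (mem_univ k), card_univ, Fintype.card_fin, nsmul_eq_mul,
    Nat.cast_sub (by omega), Nat.cast_one]
  field_simp
  ring

theorem sum_condLaw_mul_exp (hL : 2 ≤ L) (i : Fin M) {k g : Fin L} (hgk : g ≠ k) (t : ℝ) :
    ∑ a, condLaw q w i k a *
        exp (t * ((if a = g.succ then 1 else 0) - if a = k.succ then 1 else 0))
      = 1 + (q * w i * (exp (-t) - 1) + q * ((1 - w i) / ((L : ℝ) - 1)) * (exp t - 1)) := by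
  have hexp : ∀ a : Fin (L + 1),
      exp (t * ((if a = g.succ then 1 else 0) - if a = k.succ then 1 else 0))
        = 1 + ((if a = k.succ then exp (-t) - 1 else 0)
          + if a = g.succ then exp t - 1 else 0) := by
    intro a
    by_cases hk : a = k.succ
    · simp [hk, hgk.symm]
    · by_cases hg : a = g.succ <;> simp [hk, hg, hgk]
  simp only [hexp, mul_add, mul_one, sum_add_distrib, sum_condLaw hL, mul_ite, mul_zero,
    sum_ite_eq', mem_univ, if_true, condLaw_succ, if_neg hgk]

theorem sum_prod_condLaw_le_exp (hM : 0 < M) (hL : 2 ≤ L) (hq0 : 0 < q) (hq1 : q ≤ 1)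
    (hw0 : ∀ i, 0 ≤ w i) (hw1 : ∀ i, w i ≤ 1) (hwbar : 1 / (L : ℝ) < (M : ℝ)⁻¹ * ∑ i, w i)
    {k g : Fin L} (hgk : g ≠ k) :
    ∑ h ∈ univ.filter (fun h => voteCount h k ≤ voteCount h g), ∏ i, condLaw q w i k (h i)
      ≤ exp (-majorityExponent L M q ((M : ℝ)⁻¹ * ∑ i, w i)) := by
  have hLR : (2 : ℝ) ≤ L := by exact_mod_cast hL
  set W := ∑ i, w i
  set P := q * W
  set R := q * ((M : ℝ) - W) / ((L : ℝ) - 1)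
  have hWM : W ≤ M := by simpa using sum_le_sum fun i (_ : i ∈ univ) => hw1 i
  have hR : 0 ≤ R := div_nonneg (mul_nonneg hq0.le (by linarith)) (by linarith)
  have hL1 : (L : ℝ) - 1 ≠ 0 := by linarith
  have hPR : P - R = q * L * M * ((M : ℝ)⁻¹ * W - 1 / L) / (L - 1) := by
    simp only [P, R]
    field_simp
    ring
  have hRP : R < P := by
    have : 0 < (M : ℝ)⁻¹ * W - 1 / L := by linarith
    rw [← sub_pos, hPR]
    exact div_pos (by positivity) (by linarith)
  have hS : P + R ≤ M * q := by
    have : ((M : ℝ) - W) / ((L : ℝ) - 1) ≤ M - W := div_le_self (by linarith) (by linarith)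
    calc P + R = q * (W + ((M : ℝ) - W) / ((L : ℝ) - 1)) := by ring
      _ ≤ q * (W + (M - W)) := by gcongr
      _ = M * q := by ring
  obtain ⟨t, ht, hPRt⟩ := exists_nonneg_chernoff_exponent_le hR hRP hS
  let X : Fin M → Fin (L + 1) → ℝ := fun _ a =>
    (if a = g.succ then 1 else 0) - if a = k.succ then 1 else 0
  have hX : ∀ h ∈ univ.filter (fun h => voteCount h k ≤ voteCount h g), 0 ≤ ∑ i, X i (h i) := by
    intro h hh
    rw [mem_filter] at hh
    simp only [X, sum_sub_distrib]
    exact sub_nonneg.2 hh.2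
  have hp : ∀ i a, 0 ≤ condLaw q w i k a := fun i => condLaw_nonneg hq0.le hq1 i (hw0 i) (hw1 i) k
  calc _ ≤ ∏ i, ∑ a, condLaw q w i k a * exp (t * X i a) :=
        sum_prod_le_prod_sum_mul_exp hp X hX ht
    _ ≤ exp (∑ i, (q * w i * (exp (-t) - 1) + q * ((1 - w i) / ((L : ℝ) - 1)) * (exp t - 1))) :=
        prod_le_exp_sum_of_le_one_add
          (fun i _ => sum_nonneg fun a _ => mul_nonneg (hp i a) (exp_pos _).le)
          (fun i _ => (sum_condLaw_mul_exp hL i hgk t).le)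
    _ = exp (P * (exp (-t) - 1) + R * (exp t - 1)) := by
        congr 1
        simp only [sum_add_distrib, ← sum_mul, ← mul_sum, ← sum_div, sum_sub_distrib, sum_const,
          card_univ, Fintype.card_fin, nsmul_eq_mul, mul_one, P, R, W]
        ring
    _ ≤ exp (-(P - R) ^ 2 / (2 * (M * q))) := exp_le_exp.2 hPRt
    _ = exp (-majorityExponent L M q ((M : ℝ)⁻¹ * W)) := by
        rw [hPR, majorityExponent]
        field_simp

theorem measureReal_majority_ne_le {Ω : Type*} [MeasurableSpace Ω] {μ : Measure Ω}
    [IsProbabilityMeasure μ] (hM : 0 < M) (hL : 2 ≤ L) (hq0 : 0 < q) (hq1 : q ≤ 1)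
    (hw0 : ∀ i, 0 ≤ w i) (hw1 : ∀ i, w i ≤ 1) (hwbar : 1 / (L : ℝ) < (M : ℝ)⁻¹ * ∑ i, w i)
    {Y Yhat : Ω → Fin L} {V : Fin M → Ω → Fin (L + 1)} (hY : Measurable Y)
    (hlaw : ∀ k (h : Fin M → Fin (L + 1)), μ.real {ω | Y ω = k ∧ ∀ i, V i ω = h i}
      = μ.real {ω | Y ω = k} * ∏ i, condLaw q w i k (h i))
    (hYhat : ∀ ω k, voteCount (fun i => V i ω) k ≤ voteCount (fun i => V i ω) (Yhat ω)) :
    μ.real {ω | Yhat ω ≠ Y ω}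
      ≤ ((L : ℝ) - 1) * exp (-majorityExponent L M q ((M : ℝ)⁻¹ * ∑ i, w i)) := by
  set K := exp (-majorityExponent L M q ((M : ℝ)⁻¹ * ∑ i, w i))
  let votes : Ω → Fin M → Fin (L + 1) := fun ω i => V i ω
  let S : Fin L → Fin L → Finset (Fin M → Fin (L + 1)) := fun k g =>
    univ.filter fun h => voteCount h k ≤ voteCount h g
  have hpair : ∀ k g, g ≠ k →
      μ.real {ω | Y ω = k ∧ votes ω ∈ S k g} ≤ μ.real {ω | Y ω = k} * K := by
    intro k g hgk
    calc _ ≤ ∑ h ∈ S k g, μ.real {ω | Y ω = k ∧ votes ω = h} :=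
          measureReal_and_mem_le_sum _ _ _
      _ = μ.real {ω | Y ω = k} * ∑ h ∈ S k g, ∏ i, condLaw q w i k (h i) := by
          rw [mul_sum]
          refine sum_congr rfl fun h _ => ?_
          simp only [votes, funext_iff]
          exact hlaw k h
      _ ≤ _ := by
          gcongr
          exact sum_prod_condLaw_le_exp hM hL hq0 hq1 hw0 hw1 hwbar hgk
  have hcover : {ω | Yhat ω ≠ Y ω}
      ⊆ ⋃ k, ⋃ g ∈ univ.erase k, {ω | Y ω = k ∧ votes ω ∈ S k g} := by
    intro ω hω
    simp only [Set.mem_iUnion]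
    exact ⟨Y ω, Yhat ω, mem_erase.2 ⟨hω, mem_univ _⟩, rfl,
      mem_filter.2 ⟨mem_univ _, hYhat ω (Y ω)⟩⟩
  have hsum : ∑ k, μ.real {ω | Y ω = k} = 1 :=
    (sum_measureReal_preimage_singleton univ fun k _ => hY (measurableSet_singleton k)).trans
      (by simp)
  calc μ.real {ω | Yhat ω ≠ Y ω}
      ≤ ∑ k, ∑ g ∈ univ.erase k, μ.real {ω | Y ω = k ∧ votes ω ∈ S k g} :=
        (measureReal_mono hcover).trans <| (measureReal_iUnion_fintype_le _).trans <|
          sum_le_sum fun k _ => measureReal_biUnion_finset_le _ _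
    _ ≤ ∑ k, ∑ _g ∈ univ.erase k, μ.real {ω | Y ω = k} * K := by
        gcongr with k _ g hg
        exact hpair k g (ne_of_mem_erase hg)
    _ = ((L : ℝ) - 1) * K * ∑ k, μ.real {ω | Y ω = k} := by
        simp only [sum_const, card_erase_of_mem (mem_univ _), card_univ, Fintype.card_fin,
          nsmul_eq_mul, mul_sum]
        refine sum_congr rfl fun k _ => ?_
        rw [Nat.cast_sub (by omega), Nat.cast_one]
        ring
    _ = ((L : ℝ) - 1) * K := by rw [hsum, mul_one]

end CrowdHom

theorem mv_mean_error_rate_bounds_general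
    {Ω : Type*} [MeasurableSpace Ω] (μ : Measure Ω) [IsProbabilityMeasure μ]
    {M N L : ℕ} (hM : 0 < M) (hL : 2 ≤ L)
    (y : Fin N → Ω → Fin L) (Z : Fin M → Fin N → Ω → Fin (L + 1))
    (hym : ∀ j, Measurable (y j))
    (pri : Fin L → ℝ) (q : ℝ) (w : Fin M → ℝ)
    (hq0 : 0 < q) (hq1 : q ≤ 1)
    (hw0 : ∀ i, 0 ≤ w i) (hw1 : ∀ i, w i ≤ 1)
    (hprior : ∀ (j : Fin N) (k : Fin L), (μ {ω | y j ω = k}).toReal = pri k)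
    (hlaw : ∀ (j : Fin N) (k : Fin L) (h : Fin M → Fin (L + 1)),
      (μ {ω | y j ω = k ∧ ∀ i, Z i j ω = h i}).toReal
        = pri k * ∏ i, CrowdHom.condLaw q w i k (h i))
    (yhat : Fin N → Ω → Fin L)
    (hyhat : ∀ (j : Fin N) (ω : Ω) (k : Fin L),
      (∑ i, if Z i j ω = k.succ then (1 : ℝ) else 0)
        ≤ ∑ i, if Z i j ω = (yhat j ω).succ then (1 : ℝ) else 0)
    (hwbar : 1 / (L : ℝ) < (M : ℝ)⁻¹ * ∑ i, w i) :
    ((N : ℝ)⁻¹ * ∑ j, (μ {ω | yhat j ω ≠ y j ω}).toReal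
      ≤ ((L : ℝ) - 1) * Real.exp (-(1 / 2) * ((L : ℝ) / ((L : ℝ) - 1)) ^ 2 * (M : ℝ)
          * q ^ 2 * ((M : ℝ)⁻¹ * ∑ i, w i - 1 / (L : ℝ)) ^ 2))
    ∧ ((N : ℝ)⁻¹ * ∑ j, (μ {ω | yhat j ω ≠ y j ω}).toReal
      ≤ ((L : ℝ) - 1) * Real.exp (-((1 / 2) * ((L : ℝ) / ((L : ℝ) - 1)) ^ 2 * (M : ℝ)
          * q * ((M : ℝ)⁻¹ * ∑ i, w i - 1 / (L : ℝ)) ^ 2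
          / (1 + (L : ℝ) / (3 * ((L : ℝ) - 1)) * ((M : ℝ)⁻¹ * ∑ i, w i - 1 / (L : ℝ)))))) := by
  have hL1 : (0 : ℝ) ≤ L - 1 := by linarith [show (2 : ℝ) ≤ L by exact_mod_cast hL]
  have hδ : 0 < (M : ℝ)⁻¹ * ∑ i, w i - 1 / L := by linarith
  set E := CrowdHom.majorityExponent L M q ((M : ℝ)⁻¹ * ∑ i, w i) with hE
  have hE0 : 0 ≤ E := by rw [hE, CrowdHom.majorityExponent]; positivity
  have havg : (N : ℝ)⁻¹ * ∑ j, μ.real {ω | yhat j ω ≠ y j ω} ≤ ((L : ℝ) - 1) * exp (-E) :=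
    inv_mul_sum_le_of_forall_le (by positivity) fun j =>
      CrowdHom.measureReal_majority_ne_le hM hL hq0 hq1 hw0 hw1 hwbar (hym j)
        (fun k h => (hlaw j k h).trans (by rw [← hprior j k]; rfl)) (hyhat j)
  refine ⟨havg.trans ?_, havg.trans ?_⟩ <;>
    refine mul_le_mul_of_nonneg_left (exp_le_exp.2 ?_) hL1
  · rw [show -(1 / 2) * ((L : ℝ) / ((L : ℝ) - 1)) ^ 2 * (M : ℝ) * q ^ 2
        * ((M : ℝ)⁻¹ * ∑ i, w i - 1 / (L : ℝ)) ^ 2 = -(E * q) by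
      rw [hE, CrowdHom.majorityExponent]; ring]
    exact neg_le_neg (mul_le_of_le_one_right hE0 hq1)
  · exact neg_le_neg (div_le_self hE0 (le_add_of_nonneg_right (by positivity)))

/-- Under the homogeneous Dawid–Skene model with constant assignment
probability `q` and majority voting: if `w̄ > 1/L` then
`E[E_N] ≤ (L−1)·exp(−(1/2)(L/(L−1))² M q² (w̄−1/L)²)` and also
`E[E_N] ≤ (L−1)·exp(−[(1/2)(L/(L−1))² M q (w̄−1/L)²]/[1 + (L/(3(L−1)))(w̄−1/L)])`. -/
theorem mv_mean_error_rate_bounds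
    {Ω : Type*} [MeasurableSpace Ω] (μ : Measure Ω) [IsProbabilityMeasure μ]
    {M N L : ℕ} (hM : 0 < M) (hN : 0 < N) (hL : 2 ≤ L)
    (y : Fin N → Ω → Fin L) (Z : Fin M → Fin N → Ω → Fin (L + 1))
    (hym : ∀ j, Measurable (y j)) (hZm : ∀ i j, Measurable (Z i j))
    (pri : Fin L → ℝ) (q : ℝ) (w : Fin M → ℝ)
    (hpri : ∀ k, 0 ≤ pri k) (hq0 : 0 < q) (hq1 : q ≤ 1)
    (hw0 : ∀ i, 0 ≤ w i) (hw1 : ∀ i, w i ≤ 1)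
    (hprior : ∀ (j : Fin N) (k : Fin L), (μ {ω | y j ω = k}).toReal = pri k)
    (hlaw : ∀ (j : Fin N) (k : Fin L) (h : Fin M → Fin (L + 1)),
      (μ {ω | y j ω = k ∧ ∀ i, Z i j ω = h i}).toReal
        = pri k * ∏ i, CrowdHom.condLaw q w i k (h i))
    (hindep : iIndepFun (fun j ω => (y j ω, fun i => Z i j ω)) μ)
    (yhat : Fin N → Ω → Fin L) (hyhatm : ∀ j, Measurable (yhat j))
    (hyhat : ∀ (j : Fin N) (ω : Ω) (k : Fin L),
      (∑ i, if Z i j ω = k.succ then (1 : ℝ) else 0)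
        ≤ ∑ i, if Z i j ω = (yhat j ω).succ then (1 : ℝ) else 0)
    (hwbar : 1 / (L : ℝ) < (M : ℝ)⁻¹ * ∑ i, w i) :
    ((N : ℝ)⁻¹ * ∑ j, (μ {ω | yhat j ω ≠ y j ω}).toReal
      ≤ ((L : ℝ) - 1) * Real.exp (-(1 / 2) * ((L : ℝ) / ((L : ℝ) - 1)) ^ 2 * (M : ℝ)
          * q ^ 2 * ((M : ℝ)⁻¹ * ∑ i, w i - 1 / (L : ℝ)) ^ 2))
    ∧ ((N : ℝ)⁻¹ * ∑ j, (μ {ω | yhat j ω ≠ y j ω}).toReal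
      ≤ ((L : ℝ) - 1) * Real.exp (-((1 / 2) * ((L : ℝ) / ((L : ℝ) - 1)) ^ 2 * (M : ℝ)
          * q * ((M : ℝ)⁻¹ * ∑ i, w i - 1 / (L : ℝ)) ^ 2
          / (1 + (L : ℝ) / (3 * ((L : ℝ) - 1)) * ((M : ℝ)⁻¹ * ∑ i, w i - 1 / (L : ℝ)))))) :=
  mv_mean_error_rate_bounds_general μ hM hL y Z hym pri q w hq0 hq1 hw0 hw1 hprior hlaw yhat hyhat
    hwbar
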